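/- Let s₀ ∈ S' and σ ∈ Σ^Opt. Then Pr_{σ,s₀}(◊T) = Val(s₀) if and only if Pr'_{σ,s₀}(◊T) = 1. -/

import Mathlib

open scoped ENNReal NNReal Classical
open Filter

universe u v

variable {S : Type u} {A : Type v}

/-- A finite MDP: `P s a = some d` means action `a` is legal at `s` and `d` is a
probability distribution on `S`; every state has at least one legal action. -/
structure MDP (S : Type u) (A : Type v) [Fintype S] [Fintype A] where
  P : S → A → Option (S → NNReal)
  sum_one : ∀ s a d, P s a = some d → (∑ s', d s') = 1
  exists_legal : ∀ s, ∃ a, (P s a).isSome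

/-- Last state of an alternating path starting at `s` with steps `steps`. -/
def lastState : S → List (A × S) → S
  | s, [] => s
  | _, (_, s') :: rest => lastState s' rest

/-- A finite path: a start state together with a list of (action, next-state) steps. -/
structure FPath (S : Type u) (A : Type v) where
  start : S
  steps : List (A × S)

namespace FPath

def last (ρ : FPath S A) : S := lastState ρ.start ρ.steps

def states (ρ : FPath S A) : List S := ρ.start :: ρ.steps.map Prod.snd

def length (ρ : FPath S A) : ℕ := ρ.steps.length

end FPath

/-- A (raw) strategy: maps each finite path (start state + steps) to a distribution on actions. -/
def Strat (S : Type u) (A : Type v) := S → List (A × S) → A → ℝ≥0∞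

/-- Shifted strategy `σ_ρ` for `ρ = (s₀, pre)`: `σ_ρ(ρ') = σ(ρ·ρ')`. -/
def shiftStrat (σ : Strat S A) (s₀ : S) (pre : List (A × S)) : Strat S A :=
  fun _ steps a => σ s₀ (pre ++ steps) a

/-- Generic cylinder weight (product of strategy- and transition-probabilities along the
steps), relative to a transition kernel `p`. The accumulator `pre` is the path-prefix so far. -/
noncomputable def wtP (p : S → A → S → ℝ≥0∞) (σ : Strat S A) (s₀ : S) :
    List (A × S) → List (A × S) → ℝ≥0∞
  | _, [] => 1
  | pre, (a, s') :: rest =>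
      σ s₀ pre a * p (lastState s₀ pre) a s' * wtP p σ s₀ (pre ++ [(a, s')]) rest
  termination_by pre l => l.length

/-- Generic cylinder probability of path `ρ` from start state `s`, kernel `p`. -/
noncomputable def cylProbP (p : S → A → S → ℝ≥0∞) (σ : Strat S A) (s : S) (ρ : FPath S A) :
    ℝ≥0∞ :=
  if ρ.start = s then wtP p σ ρ.start [] ρ.steps else 0

namespace MDP

variable [Fintype S] [Fintype A]

def legal (M : MDP S A) (s : S) (a : A) : Prop := (M.P s a).isSome

noncomputable def prob (M : MDP S A) (s : S) (a : A) (s' : S) : ℝ≥0∞ :=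
  (M.P s a).elim 0 fun d => (d s' : ℝ≥0∞)

/-- `ρ` is a finite path of `M` from `s`: every action legal, every transition of
positive probability. -/
def IsPathFrom (M : MDP S A) : S → List (A × S) → Prop
  | _, [] => True
  | s, (a, s') :: rest => M.legal s a ∧ 0 < M.prob s a s' ∧ M.IsPathFrom s' rest

def IsPath (M : MDP S A) (ρ : FPath S A) : Prop := M.IsPathFrom ρ.start ρ.steps

/-- `σ` is a strategy: at every finite path it gives a probability distribution on actions
supported on actions legal at the last state. -/
def IsStrategy (M : MDP S A) (σ : Strat S A) : Prop :=
  ∀ s steps, M.IsPathFrom s steps →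
    (∑ a, σ s steps a) = 1 ∧ ∀ a, 0 < σ s steps a → M.legal (lastState s steps) a

/-- Cylinder probability `P_{σ,s}(ρ)` in `M`. -/
noncomputable def cylProb (M : MDP S A) (σ : Strat S A) (s : S) (ρ : FPath S A) : ℝ≥0∞ :=
  cylProbP M.prob σ s ρ

/-- `T` is a set of sink states: each `t ∈ T` has exactly one legal action, leading back
to `t` with probability `1`. -/
def SinkSet (M : MDP S A) (T : Set S) : Prop :=
  ∀ t ∈ T, (∃! a, M.legal t a) ∧ ∀ a, M.legal t a → M.prob t a t = 1

/-- Generic pruned finite-path predicate: all states have positive value `v` and every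
step uses an `opt` state-action pair with positive transition probability in `M`. -/
def IsPathFromPruned (M : MDP S A) (v : S → ℝ≥0∞) (opt : S → A → Prop) :
    S → List (A × S) → Prop
  | s, [] => 0 < v s
  | s, (a, s') :: rest =>
      0 < v s ∧ opt s a ∧ 0 < M.prob s a s' ∧ M.IsPathFromPruned v opt s' rest

/-! ### Reachability -/

/-- `ρ` is a `T`-hitting path: its last state lies in `T` and no other state does. -/
def HitsFirst (T : Set S) (ρ : FPath S A) : Prop :=
  ρ.last ∈ T ∧ ∀ x ∈ ρ.states.dropLast, x ∉ T

/-- `Pr_{σ,s}(◊T)`: sum over `T`-hitting paths starting at `s` of their cylinder probabilities. -/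
noncomputable def prReach (M : MDP S A) (σ : Strat S A) (s : S) (T : Set S) : ℝ≥0∞ :=
  ∑' ρ : {ρ : FPath S A // M.IsPath ρ ∧ HitsFirst T ρ ∧ ρ.start = s}, M.cylProb σ s ρ.1

/-- `Val(s)` for reachability: supremum over strategies of `Pr_{σ,s}(◊T)`. -/
noncomputable def reachVal (M : MDP S A) (T : Set S) (s : S) : ℝ≥0∞ :=
  ⨆ (σ : Strat S A) (_ : M.IsStrategy σ), M.prReach σ s T

/-- `(s,a) ∈ Opt` for reachability. -/
def OptR (M : MDP S A) (T : Set S) (s : S) (a : A) : Prop :=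
  M.legal s a ∧ M.reachVal T s = ∑ s', M.prob s a s' * M.reachVal T s'

/-- `σ ∈ Σ^Opt` for reachability. -/
def SigmaOptR (M : MDP S A) (T : Set S) (σ : Strat S A) : Prop :=
  ∀ s steps, M.IsPathFrom s steps → ∀ a, 0 < σ s steps a → M.OptR T (lastState s steps) a

/-- Transition probabilities of the pruned MDP `M'` for reachability. -/
noncomputable def probR' (M : MDP S A) (T : Set S) (s : S) (a : A) (s' : S) : ℝ≥0∞ :=
  if M.OptR T s a ∧ 0 < M.reachVal T s then
    M.prob s a s' * M.reachVal T s' / M.reachVal T s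
  else 0

/-- `ρ` is a finite path of the pruned MDP `M'` (reachability version). -/
def IsPathR' (M : MDP S A) (T : Set S) (ρ : FPath S A) : Prop :=
  M.IsPathFromPruned (M.reachVal T) (M.OptR T) ρ.start ρ.steps

/-- Cylinder probability `P'_{σ,s}(ρ)` in the pruned MDP `M'` (reachability version). -/
noncomputable def cylProbR' (M : MDP S A) (T : Set S) (σ : Strat S A) (s : S) (ρ : FPath S A) :
    ℝ≥0∞ :=
  cylProbP (M.probR' T) σ s ρ

/-- `Pr'_{σ,s}(◊T)` in the pruned MDP `M'`. -/
noncomputable def prReach' (M : MDP S A) (σ : Strat S A) (s : S) (T : Set S) : ℝ≥0∞ :=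
  ∑' ρ : {ρ : FPath S A // M.IsPathR' T ρ ∧ HitsFirst T ρ ∧ ρ.start = s},
    M.cylProbR' T σ s ρ.1

/-- Probability of hitting `T` for the first time in exactly `r` steps, in `M`. -/
noncomputable def hitLenProb (M : MDP S A) (σ : Strat S A) (s : S) (T : Set S) (r : ℕ) :
    ℝ≥0∞ :=
  ∑' ρ : {ρ : FPath S A // M.IsPath ρ ∧ HitsFirst T ρ ∧ ρ.start = s ∧ ρ.length = r},
    M.cylProb σ s ρ.1

/-- Probability of hitting `T` for the first time in exactly `r` steps, in `M'`. -/
noncomputable def hitLenProb' (M : MDP S A) (σ : Strat S A) (s : S) (T : Set S) (r : ℕ) :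
    ℝ≥0∞ :=
  ∑' ρ : {ρ : FPath S A // M.IsPathR' T ρ ∧ HitsFirst T ρ ∧ ρ.start = s ∧ ρ.length = r},
    M.cylProbR' T σ s ρ.1

/-- Conditional expected length to target `E_{σ,s}(len_T | ◊T)`. -/
noncomputable def condExpLen (M : MDP S A) (σ : Strat S A) (s : S) (T : Set S) : ℝ≥0∞ :=
  ∑' r : ℕ, (r : ℝ≥0∞) * M.hitLenProb σ s T r / M.prReach σ s T

/-- Expected length to target in `M'`, `E'_{σ,s}(len_T)`; `∞` unless `Pr'_{σ,s}(◊T) = 1`. -/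
noncomputable def expLen' (M : MDP S A) (σ : Strat S A) (s : S) (T : Set S) : ℝ≥0∞ :=
  if M.prReach' σ s T = 1 then ∑' r : ℕ, (r : ℝ≥0∞) * M.hitLenProb' σ s T r else ⊤

/-! ### Safety -/

/-- `Safe_n(σ,s)`: probability of the paths of length `n` from `s` avoiding `Bad`. -/
noncomputable def safeN (M : MDP S A) (σ : Strat S A) (s : S) (Bad : Set S) (n : ℕ) : ℝ≥0∞ :=
  ∑' ρ : {ρ : FPath S A //
      M.IsPath ρ ∧ ρ.start = s ∧ ρ.length = n ∧ ∀ x ∈ ρ.states, x ∉ Bad},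
    M.cylProb σ s ρ.1

/-- `Pr_{σ,s}(□¬Bad) := ⨅ n, Safe_n(σ,s)`. -/
noncomputable def prSafe (M : MDP S A) (σ : Strat S A) (s : S) (Bad : Set S) : ℝ≥0∞ :=
  ⨅ n : ℕ, M.safeN σ s Bad n

/-- `Val(s)` for safety: supremum over strategies of `Pr_{σ,s}(□¬Bad)`. -/
noncomputable def safeVal (M : MDP S A) (Bad : Set S) (s : S) : ℝ≥0∞ :=
  ⨆ (σ : Strat S A) (_ : M.IsStrategy σ), M.prSafe σ s Bad

/-- `(s,a) ∈ Opt` for safety. -/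
def OptS (M : MDP S A) (Bad : Set S) (s : S) (a : A) : Prop :=
  M.legal s a ∧ M.safeVal Bad s = ∑ s', M.prob s a s' * M.safeVal Bad s'

/-- `σ ∈ Σ^Opt` for safety. -/
def SigmaOptS (M : MDP S A) (Bad : Set S) (σ : Strat S A) : Prop :=
  ∀ s steps, M.IsPathFrom s steps → ∀ a, 0 < σ s steps a → M.OptS Bad (lastState s steps) a

/-- `UPreⁱ(Bad)`. -/
def UPre (M : MDP S A) (Bad : Set S) : ℕ → Set S
  | 0 => Bad
  | i + 1 => {s | ∀ a, M.legal s a → ∃ s' ∈ M.UPre Bad i, 0 < M.prob s a s'}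

/-- `Good := S \ UPre*(Bad)`. -/
def GoodSet (M : MDP S A) (Bad : Set S) : Set S := (⋃ i, M.UPre Bad i)ᶜ

/-- `V := S \ (Good ∪ Bad)`. -/
def VSet (M : MDP S A) (Bad : Set S) : Set S := (M.GoodSet Bad ∪ Bad)ᶜ

/-- `Pr_{σ,s}(GoodCyl(ρ)) := P_{σ,s}(ρ) · Pr_{σ_ρ, last(ρ)}(□¬Bad)`. -/
noncomputable def goodCyl (M : MDP S A) (σ : Strat S A) (s : S) (Bad : Set S) (ρ : FPath S A) :
    ℝ≥0∞ :=
  M.cylProb σ s ρ * M.prSafe (shiftStrat σ ρ.start ρ.steps) ρ.last Bad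

/-- Transition probabilities of the pruned MDP `M'` for safety. -/
noncomputable def probS' (M : MDP S A) (Bad : Set S) (s : S) (a : A) (s' : S) : ℝ≥0∞ :=
  if M.OptS Bad s a ∧ 0 < M.safeVal Bad s then
    M.prob s a s' * M.safeVal Bad s' / M.safeVal Bad s
  else 0

/-- `ρ` is a finite path of the pruned MDP `M'` (safety version). -/
def IsPathS' (M : MDP S A) (Bad : Set S) (ρ : FPath S A) : Prop :=
  M.IsPathFromPruned (M.safeVal Bad) (M.OptS Bad) ρ.start ρ.steps

/-- Cylinder probability `P'_{σ,s}(ρ)` in the pruned MDP `M'` (safety version). -/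
noncomputable def cylProbS' (M : MDP S A) (Bad : Set S) (σ : Strat S A) (s : S)
    (ρ : FPath S A) : ℝ≥0∞ :=
  cylProbP (M.probS' Bad) σ s ρ

end MDP

/-- `Reward_n(ρ) = ∑_{i<n} R(sᵢ, aᵢ)` for `ρ` starting at `s` with steps `steps`. -/
def rewardOf (R : S → A → ℝ) : S → List (A × S) → ℝ
  | _, [] => 0
  | s, (a, s') :: rest => R s a + rewardOf R s' rest

namespace MDP

variable [Fintype S] [Fintype A]

/-- `E'_{σ,s}(Reward_n)` in the pruned MDP `M'` (safety version). -/
noncomputable def expRewN' (M : MDP S A) (Bad : Set S) (R : S → A → ℝ) (σ : Strat S A)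
    (s : S) (n : ℕ) : ℝ :=
  ∑' ρ : {ρ : FPath S A // M.IsPathS' Bad ρ ∧ ρ.start = s ∧ ρ.length = n},
    (M.cylProbS' Bad σ s ρ.1).toReal * rewardOf R ρ.1.start ρ.1.steps

/-- `E'_{σ,s}(MP) := liminf_n (1/n)·E'_{σ,s}(Reward_n)`. -/
noncomputable def mp' (M : MDP S A) (Bad : Set S) (R : S → A → ℝ) (σ : Strat S A) (s : S) :
    ℝ :=
  Filter.atTop.liminf fun n : ℕ => M.expRewN' Bad R σ s n / n

/-- `E_{σ,s}(Reward_n | □¬Bad)`. -/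
noncomputable def condExpRewN (M : MDP S A) (Bad : Set S) (R : S → A → ℝ) (σ : Strat S A)
    (s : S) (n : ℕ) : ℝ :=
  (∑' ρ : {ρ : FPath S A // M.IsPath ρ ∧ ρ.start = s ∧ ρ.length = n},
    (M.goodCyl σ s Bad ρ.1).toReal * rewardOf R ρ.1.start ρ.1.steps) /
  (M.prSafe σ s Bad).toReal

/-- `E_{σ,s}(MP | □¬Bad) := liminf_n (1/n)·E_{σ,s}(Reward_n | □¬Bad)`. -/
noncomputable def condMP (M : MDP S A) (Bad : Set S) (R : S → A → ℝ) (σ : Strat S A)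
    (s : S) : ℝ :=
  Filter.atTop.liminf fun n : ℕ => M.condExpRewN Bad R σ s n / n

end MDP

/-! Along a path of `M'` the factors `Val(sᵢ₊₁) / Val(sᵢ)` telescope, so for a
`T`-hitting path `ρ` from `s₀` we get
`P'_{σ,s₀}(ρ) · Val(s₀) = P_{σ,s₀}(ρ) · Val(last ρ) = P_{σ,s₀}(ρ)`, as `Val = 1` on `T`.
Conversely a `T`-hitting path of positive probability under `σ ∈ Σ^Opt` uses only
`Opt`-actions, and all its states have positive value (backwards from `T`, through the
`Opt`-equations), so it is a path of `M'`. Hence `Pr_{σ,s₀}(◊T) = Pr'_{σ,s₀}(◊T) · Val(s₀)`,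
and the claim follows from `0 < Val(s₀) ≤ 1`. -/

theorem lastState_append (s : S) (u v : List (A × S)) :
    lastState s (u ++ v) = lastState (lastState s u) v := by
  induction u generalizing s with
  | nil => rfl
  | cons x rest ih => exact ih x.2

@[simp]
theorem wtP_nil (p : S → A → S → ℝ≥0∞) (σ : Strat S A) (s : S) (pre : List (A × S)) :
    wtP p σ s pre [] = 1 := by
  simp [wtP]

theorem wtP_cons (p : S → A → S → ℝ≥0∞) (σ : Strat S A) (s : S) (pre : List (A × S))
    (a : A) (s' : S) (rest : List (A × S)) :
    wtP p σ s pre ((a, s') :: rest)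
      = σ s pre a * p (lastState s pre) a s' * wtP p σ s (pre ++ [(a, s')]) rest := by
  simp [wtP]

theorem wtP_shiftStrat (p : S → A → S → ℝ≥0∞) (σ : Strat S A) (s : S)
    (pre₀ : List (A × S)) :
    ∀ rest pre : List (A × S),
      wtP p (shiftStrat σ s pre₀) (lastState s pre₀) pre rest = wtP p σ s (pre₀ ++ pre) rest
  | [], _ => by simp
  | (a, s') :: rest, pre => by
    rw [wtP_cons, wtP_cons, wtP_shiftStrat p σ s pre₀ rest, lastState_append, List.append_assoc]
    rfl

theorem ENNReal.tsum_list_eq_tsum_cons {X : Type*} (g : List X → ℝ≥0∞) (hg : g [] = 0) :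
    ∑' l, g l = ∑' (x : X) (rest : List X), g (x :: rest) := by
  have hcons : Function.Injective fun p : X × List X => p.1 :: p.2 :=
    fun p q h => Prod.ext (List.cons.inj h).1 (List.cons.inj h).2
  refine (hcons.tsum_eq (f := g) ?_).symm.trans ENNReal.tsum_prod'
  rintro (_ | ⟨x, rest⟩) hl
  · exact absurd hg hl
  · exact ⟨(x, rest), rfl⟩

namespace MDP

theorem hitsFirst_nil {T : Set S} {s : S} : HitsFirst T (⟨s, []⟩ : FPath S A) ↔ s ∈ T := by
  simp [HitsFirst, FPath.states, FPath.last, lastState]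

theorem hitsFirst_cons {T : Set S} {s s' : S} {a : A} {rest : List (A × S)} :
    HitsFirst T (⟨s, (a, s') :: rest⟩ : FPath S A) ↔
      s ∉ T ∧ HitsFirst T (⟨s', rest⟩ : FPath S A) := by
  simp only [HitsFirst, FPath.states, FPath.last, lastState, List.map_cons,
    List.dropLast_cons_cons, List.mem_cons, forall_eq_or_imp]
  tauto

variable [Fintype S] [Fintype A] (M : MDP S A) (T : Set S)

theorem isPathFrom_append {s : S} {u v : List (A × S)} (hu : M.IsPathFrom s u)
    (hv : M.IsPathFrom (lastState s u) v) : M.IsPathFrom s (u ++ v) := by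
  induction u generalizing s with
  | nil => exact hv
  | cons x rest ih => exact ⟨hu.1, hu.2.1, ih hu.2.2 hv⟩

theorem prob_sum_le_one (s : S) (a : A) : ∑ s', M.prob s a s' ≤ 1 := by
  unfold prob
  cases h : M.P s a with
  | none => simp
  | some d => simp [← ENNReal.ofNNReal_finsetSum, M.sum_one s a d h]

theorem exists_isStrategy : ∃ σ : Strat S A, M.IsStrategy σ := by
  choose f hf using M.exists_legal
  refine ⟨fun s steps => Pi.single (f (lastState s steps)) 1,
    fun s steps _ => ⟨by simp [Finset.sum_pi_single'], fun a ha => ?_⟩⟩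
  obtain rfl : a = f (lastState s steps) := by
    by_contra h
    simp [h] at ha
  exact hf _

/-- The strategy condition on the paths from `s` only; unlike `IsStrategy`, it is inherited by
`shiftStrat σ s pre` at `lastState s pre`. -/
def IsStrategyFrom (σ : Strat S A) (s : S) : Prop :=
  ∀ steps, M.IsPathFrom s steps →
    (∑ a, σ s steps a) = 1 ∧ ∀ a, 0 < σ s steps a → M.legal (lastState s steps) a

variable {M} in
theorem IsStrategyFrom.shiftStrat {σ : Strat S A} {s : S} {pre : List (A × S)}
    (hσ : M.IsStrategyFrom σ s) (hpre : M.IsPathFrom s pre) :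
    M.IsStrategyFrom (shiftStrat σ s pre) (lastState s pre) := fun steps hsteps => by
  rw [← lastState_append]
  exact hσ (pre ++ steps) (M.isPathFrom_append hpre hsteps)

noncomputable def hitWithin (σ : Strat S A) (s : S) (n : ℕ) (l : List (A × S)) : ℝ≥0∞ :=
  if HitsFirst T (⟨s, l⟩ : FPath S A) ∧ l.length < n then wtP M.prob σ s [] l else 0

theorem hitWithin_cons_le (σ : Strat S A) (s : S) (n : ℕ) (a : A) (s' : S)
    (rest : List (A × S)) :
    M.hitWithin T σ s (n + 1) ((a, s') :: rest)
      ≤ σ s [] a * M.prob s a s' * M.hitWithin T (shiftStrat σ s [(a, s')]) s' n rest := by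
  unfold hitWithin
  split_ifs with h h'
  · rw [wtP_cons]
    exact (congrArg _ (wtP_shiftStrat M.prob σ s [(a, s')] rest []).symm).le
  · exact absurd ⟨(hitsFirst_cons.1 h.1).2, by simpa using h.2⟩ h'
  all_goals exact bot_le

theorem tsum_hitWithin_le_one :
    ∀ (n : ℕ) (σ : Strat S A) (s : S), M.IsStrategyFrom σ s →
      ∑' l, M.hitWithin T σ s n l ≤ 1
  | 0, _, _, _ => by simp [hitWithin]
  | n + 1, σ, s, hσ => by
    by_cases hs : s ∈ T
    · rw [tsum_eq_single []]
      · simp [hitWithin, hitsFirst_nil, hs]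
      · rintro (_ | ⟨⟨a, s'⟩, rest⟩) hl
        · exact absurd rfl hl
        · simp [hitWithin, hitsFirst_cons, hs]
    have hnil : M.hitWithin T σ s (n + 1) [] = 0 := by simp [hitWithin, hitsFirst_nil, hs]
    have hstep (a : A) (s' : S) :
        ∑' rest, M.hitWithin T σ s (n + 1) ((a, s') :: rest) ≤ σ s [] a * M.prob s a s' := by
      calc ∑' rest, M.hitWithin T σ s (n + 1) ((a, s') :: rest)
          ≤ ∑' rest, σ s [] a * M.prob s a s'
              * M.hitWithin T (shiftStrat σ s [(a, s')]) s' n rest :=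
            ENNReal.tsum_le_tsum fun rest => M.hitWithin_cons_le T σ s n a s' rest
        _ = σ s [] a * M.prob s a s'
              * ∑' rest, M.hitWithin T (shiftStrat σ s [(a, s')]) s' n rest :=
            ENNReal.tsum_mul_left
        _ ≤ σ s [] a * M.prob s a s' := by
            rcases eq_or_ne (σ s [] a * M.prob s a s') 0 with h | h
            · simp [h]
            obtain ⟨hσa, hprob⟩ := mul_ne_zero_iff.mp h
            have hlegal := (hσ [] trivial).2 a (pos_iff_ne_zero.mpr hσa)
            exact mul_le_of_le_one_right' (tsum_hitWithin_le_one n _ s'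
              (hσ.shiftStrat (pre := [(a, s')]) ⟨hlegal, pos_iff_ne_zero.mpr hprob, trivial⟩))
    calc ∑' l, M.hitWithin T σ s (n + 1) l
        = ∑ x : A × S, ∑' rest, M.hitWithin T σ s (n + 1) (x :: rest) := by
          rw [ENNReal.tsum_list_eq_tsum_cons _ hnil, tsum_fintype]
      _ ≤ ∑ x : A × S, σ s [] x.1 * M.prob s x.1 x.2 :=
          Finset.sum_le_sum fun x _ => hstep x.1 x.2
      _ = ∑ a, σ s [] a * ∑ s', M.prob s a s' := by
          simp only [Fintype.sum_prod_type, Finset.mul_sum]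
      _ ≤ ∑ a, σ s [] a :=
          Finset.sum_le_sum fun a _ => mul_le_of_le_one_right' (M.prob_sum_le_one s a)
      _ = 1 := (hσ [] trivial).1

theorem cylProb_eq_hitWithin (σ : Strat S A) {s : S} {n : ℕ} {ρ : FPath S A}
    (hh : HitsFirst T ρ) (hs : ρ.start = s) (hlen : ρ.steps.length < n) :
    M.cylProb σ s ρ = M.hitWithin T σ s n ρ.steps := by
  obtain ⟨s, l⟩ := ρ
  subst hs
  simp [cylProb, cylProbP, hitWithin, hh, hlen]

theorem prReach_le_one {σ : Strat S A} {s : S} (hσ : M.IsStrategyFrom σ s) :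
    M.prReach σ s T ≤ 1 := by
  rw [prReach, ENNReal.tsum_eq_iSup_sum]
  refine iSup_le fun F => ?_
  set n := F.sup (fun ρ => ρ.1.steps.length) + 1
  have hsteps : Function.Injective
      fun ρ : {ρ : FPath S A // M.IsPath ρ ∧ HitsFirst T ρ ∧ ρ.start = s} => ρ.1.steps :=
    fun ρ ρ' h => Subtype.ext (congrArg₂ FPath.mk (ρ.2.2.2.trans ρ'.2.2.2.symm) h)
  calc ∑ ρ ∈ F, M.cylProb σ s ρ.1
      = ∑ ρ ∈ F, M.hitWithin T σ s n ρ.1.steps :=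
        Finset.sum_congr rfl fun ρ hρ => M.cylProb_eq_hitWithin T σ ρ.2.2.1 ρ.2.2.2
          (Nat.lt_succ_of_le (Finset.le_sup (f := fun ρ => ρ.1.steps.length) hρ))
    _ ≤ ∑' ρ : {ρ : FPath S A // M.IsPath ρ ∧ HitsFirst T ρ ∧ ρ.start = s},
          M.hitWithin T σ s n ρ.1.steps := ENNReal.sum_le_tsum F
    _ ≤ ∑' l, M.hitWithin T σ s n l := ENNReal.tsum_comp_le_tsum_of_injective hsteps _
    _ ≤ 1 := M.tsum_hitWithin_le_one T n σ s hσ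

theorem reachVal_le_one (s : S) : M.reachVal T s ≤ 1 :=
  iSup₂_le fun _ hσ => M.prReach_le_one T (hσ s)

theorem reachVal_ne_top (s : S) : M.reachVal T s ≠ ⊤ :=
  ((M.reachVal_le_one T s).trans_lt ENNReal.one_lt_top).ne

theorem one_le_prReach_of_mem (σ : Strat S A) {t : S} (ht : t ∈ T) : 1 ≤ M.prReach σ t T := by
  have hρ : M.IsPath (⟨t, []⟩ : FPath S A) ∧ HitsFirst T (⟨t, []⟩ : FPath S A) ∧
      (⟨t, []⟩ : FPath S A).start = t :=
    ⟨trivial, hitsFirst_nil.2 ht, rfl⟩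
  calc 1 = M.cylProb σ t ⟨t, []⟩ := by simp [cylProb, cylProbP]
    _ ≤ M.prReach σ t T := ENNReal.le_tsum (f := fun ρ : {ρ : FPath S A //
          M.IsPath ρ ∧ HitsFirst T ρ ∧ ρ.start = t} => M.cylProb σ t ρ.1) ⟨_, hρ⟩

theorem reachVal_of_mem {t : S} (ht : t ∈ T) : M.reachVal T t = 1 := by
  obtain ⟨σ, hσ⟩ := M.exists_isStrategy
  exact le_antisymm (M.reachVal_le_one T t)
    (le_iSup₂_of_le σ hσ (M.one_le_prReach_of_mem T σ ht))

variable {M T}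

theorem OptR.reachVal_pos {s s' : S} {a : A} (h : M.OptR T s a) (hprob : 0 < M.prob s a s')
    (hv : 0 < M.reachVal T s') : 0 < M.reachVal T s := by
  rw [h.2]
  exact (ENNReal.mul_pos hprob.ne' hv.ne').trans_le
    (Finset.single_le_sum (f := fun x => M.prob s a x * M.reachVal T x) (fun _ _ => bot_le)
      (Finset.mem_univ s'))

theorem OptR.probR'_mul_reachVal {s s' : S} {a : A} (h : M.OptR T s a)
    (hv : 0 < M.reachVal T s) :
    M.probR' T s a s' * M.reachVal T s = M.prob s a s' * M.reachVal T s' := by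
  rw [probR', if_pos ⟨h, hv⟩, ENNReal.div_mul_cancel hv.ne' (M.reachVal_ne_top T s)]

theorem IsPathFromPruned.pos_start {v : S → ℝ≥0∞} {opt : S → A → Prop} {s : S}
    {steps : List (A × S)} (h : M.IsPathFromPruned v opt s steps) : 0 < v s := by
  cases steps with
  | nil => exact h
  | cons x l => exact h.1

theorem IsPathFromPruned.isPathFrom {v : S → ℝ≥0∞} {opt : S → A → Prop}
    (hopt : ∀ s a, opt s a → M.legal s a) :
    ∀ {s : S} {steps : List (A × S)}, M.IsPathFromPruned v opt s steps → M.IsPathFrom s steps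
  | _, [], _ => trivial
  | _, _ :: _, h => ⟨hopt _ _ h.2.1, h.2.2.1, IsPathFromPruned.isPathFrom hopt h.2.2.2⟩

theorem wtP_probR'_mul_reachVal (σ : Strat S A) (s : S) :
    ∀ steps pre : List (A × S),
      M.IsPathFromPruned (M.reachVal T) (M.OptR T) (lastState s pre) steps →
      wtP (M.probR' T) σ s pre steps * M.reachVal T (lastState s pre)
        = wtP M.prob σ s pre steps * M.reachVal T (lastState s (pre ++ steps))
  | [], pre, _ => by simp
  | (a, s') :: rest, pre, ⟨hv, hopt, _, hrest⟩ => by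
    have hl : lastState s (pre ++ [(a, s')]) = s' := by rw [lastState_append]; rfl
    have ih := wtP_probR'_mul_reachVal σ s rest (pre ++ [(a, s')])
      (by rw [hl]; exact hrest)
    rw [hl, List.append_assoc, List.singleton_append] at ih
    rw [wtP_cons, wtP_cons]
    calc σ s pre a * M.probR' T (lastState s pre) a s'
          * wtP (M.probR' T) σ s (pre ++ [(a, s')]) rest * M.reachVal T (lastState s pre)
        = σ s pre a * (M.probR' T (lastState s pre) a s' * M.reachVal T (lastState s pre))
          * wtP (M.probR' T) σ s (pre ++ [(a, s')]) rest := by ring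
      _ = σ s pre a * M.prob (lastState s pre) a s'
          * (wtP (M.probR' T) σ s (pre ++ [(a, s')]) rest * M.reachVal T s') := by
        rw [hopt.probR'_mul_reachVal hv]; ring
      _ = _ := by rw [ih]; ring

theorem cylProbR'_mul_reachVal (σ : Strat S A) {ρ : FPath S A} (h : M.IsPathR' T ρ) :
    M.cylProbR' T σ ρ.start ρ * M.reachVal T ρ.start
      = M.cylProb σ ρ.start ρ * M.reachVal T ρ.last := by
  simp only [cylProbR', cylProb, cylProbP, if_pos]
  exact wtP_probR'_mul_reachVal σ ρ.start ρ.steps [] h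

theorem SigmaOptR.isPathFromPruned {σ : Strat S A} (hσ : M.SigmaOptR T σ) (s₀ : S) :
    ∀ steps pre : List (A × S), M.IsPathFrom s₀ pre → lastState s₀ (pre ++ steps) ∈ T →
      0 < wtP M.prob σ s₀ pre steps →
      M.IsPathFromPruned (M.reachVal T) (M.OptR T) (lastState s₀ pre) steps
  | [], pre, _, hlast, _ => by
    rw [List.append_nil] at hlast
    show 0 < M.reachVal T _
    rw [M.reachVal_of_mem T hlast]
    exact one_pos
  | (a, s') :: rest, pre, hpre, hlast, hw => by
    rw [wtP_cons, ENNReal.mul_pos_iff, ENNReal.mul_pos_iff] at hw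
    obtain ⟨⟨hσa, hprob⟩, hw⟩ := hw
    have hopt := hσ s₀ pre hpre a hσa
    have hl : lastState s₀ (pre ++ [(a, s')]) = s' := by rw [lastState_append]; rfl
    have hrest := hσ.isPathFromPruned s₀ rest (pre ++ [(a, s')])
      (M.isPathFrom_append hpre ⟨hopt.1, hprob, trivial⟩) (by simpa using hlast) hw
    rw [hl] at hrest
    exact ⟨hopt.reachVal_pos hprob hrest.pos_start, hopt, hprob, hrest⟩

theorem SigmaOptR.prReach_eq_prReach'_mul_reachVal {σ : Strat S A} (hσ : M.SigmaOptR T σ)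
    (s₀ : S) :
    M.prReach σ s₀ T = M.prReach' σ s₀ T * M.reachVal T s₀ := by
  have hterm (ρ : {ρ : FPath S A // M.IsPathR' T ρ ∧ HitsFirst T ρ ∧ ρ.start = s₀}) :
      M.cylProbR' T σ s₀ ρ.1 * M.reachVal T s₀ = M.cylProb σ s₀ ρ.1 := by
    obtain ⟨ρ, hp, hh, rfl⟩ := ρ
    rw [cylProbR'_mul_reachVal σ hp, M.reachVal_of_mem T hh.1, mul_one]
  rw [prReach', ← ENNReal.tsum_mul_right, tsum_congr hterm, prReach]
  -- every `T`-hitting path of `M` outside `M'` has probability `0` under `σ`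
  let ι (ρ : {ρ : FPath S A // M.IsPathR' T ρ ∧ HitsFirst T ρ ∧ ρ.start = s₀}) :
      {ρ : FPath S A // M.IsPath ρ ∧ HitsFirst T ρ ∧ ρ.start = s₀} :=
    ⟨ρ.1, IsPathFromPruned.isPathFrom (fun _ _ h => h.1) ρ.2.1, ρ.2.2⟩
  have hι : Function.Injective ι := fun ρ ρ' h => Subtype.ext (Subtype.ext_iff.mp h :)
  refine (hι.tsum_eq (f := fun ρ => M.cylProb σ s₀ ρ.1) ?_).symm
  rintro ⟨⟨s, l⟩, hp, hh, rfl⟩ hne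
  have hw : 0 < wtP M.prob σ s [] l := by
    simpa [cylProb, cylProbP, pos_iff_ne_zero] using hne
  exact ⟨⟨⟨s, l⟩, hσ.isPathFromPruned s l [] trivial hh.1 hw, hh, rfl⟩, rfl⟩

end MDP

theorem stmt4_general {S : Type u} {A : Type v} [Fintype S] [Fintype A]
    (M : MDP S A) (T : Set S)
    (s₀ : S) (hs₀ : 0 < M.reachVal T s₀)
    (σ : Strat S A) (hopt : M.SigmaOptR T σ) :
    M.prReach σ s₀ T = M.reachVal T s₀ ↔ M.prReach' σ s₀ T = 1 := by
  rw [hopt.prReach_eq_prReach'_mul_reachVal s₀,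
    ENNReal.mul_eq_right hs₀.ne' (M.reachVal_ne_top T s₀)]

/-- for `s₀ ∈ S'` and `σ ∈ Σ^Opt`,
`Pr_{σ,s₀}(◊T) = Val(s₀)` iff `Pr'_{σ,s₀}(◊T) = 1`. -/
theorem stmt4 {S : Type u} {A : Type v} [Fintype S] [Fintype A] [Nonempty S] [Nonempty A]
    (M : MDP S A) (T : Set S) (hT : M.SinkSet T)
    (s₀ : S) (hs₀ : 0 < M.reachVal T s₀)
    (σ : Strat S A) (hσ : M.IsStrategy σ) (hopt : M.SigmaOptR T σ) :
    M.prReach σ s₀ T = M.reachVal T s₀ ↔ M.prReach' σ s₀ T = 1 :=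
  stmt4_general M T s₀ hs₀ σ hopt
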